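/- There exist a polynomial power sum (G_n) of complex polynomials with no dominant characteristic root and infinitely many triples (a, b, c) of pairwise distinct nonzero polynomials such that ab + 1, ac + 1, bc + 1 are all elements of (G_n). Concretely: given three simple linear recurrences of polynomials A_n, B_n, C_n, the sequence G_n defined by G_{3u} = A_{3u}B_{3u} + 1, G_{3u+1} = A_{3u}C_{3u} + 1, G_{3u+2} = B_{3u}C_{3u} + 1 is itself a simple linear recurrence (obtained by twisting each characteristic root σ by the cube roots of unity via (1/3)s(σⁿ + (ζ₃σ)ⁿ + (ζ₃²σ)ⁿ)), and the triples (A_{3u}, B_{3u}, C_{3u}) give infinitely many solutions. -/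

import Mathlib

/-!
For a primitive cube root of unity `ζ` we have `(1 + ζⁿ + ζ²ⁿ) / 3 = [3 ∣ n]`, so the power
sum `G_n = (Xⁿ + (ζX)ⁿ + (ζ²X)ⁿ) / 3 + 1` equals `Xⁿ + 1` when `3 ∣ n` (and `1` otherwise).
Its characteristic roots `X, ζX, ζ²X` share the top degree, so none is dominant, and yet each
triple `(X^{3u}, X^{3u+3}, X^{3u+6})` has `ab + 1, ac + 1, bc + 1` of the form `X^{3m} + 1`.
-/

open Polynomial Finset

theorem IsPrimitiveRoot.sum_pow_pow_eq_ite {K : Type*} [CommRing K] [IsDomain K] {ζ : K}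
    {N : ℕ} (hζ : IsPrimitiveRoot ζ N) (n : ℕ) :
    ∑ j ∈ range N, (ζ ^ j) ^ n = if N ∣ n then (N : K) else 0 := by
  simp_rw [← pow_mul, mul_comm _ n, pow_mul]
  split_ifs with hn
  · simp [(hζ.pow_eq_one_iff_dvd n).2 hn]
  · have hne : ζ ^ n - 1 ≠ 0 := sub_ne_zero.2 fun h => hn ((hζ.pow_eq_one_iff_dvd n).1 h)
    refine (mul_eq_zero.1 ?_).resolve_left hne
    rw [mul_geom_sum, pow_right_comm, hζ.pow_eq_one, one_pow, sub_self]

def HasDominantRoot {R : Type*} [Semiring R] (k : ℕ) (α : ℕ → R[X]) : Prop :=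
  ∃ i, i < k ∧ ∀ j, j < k → j ≠ i → (α j).natDegree < (α i).natDegree

theorem not_hasDominantRoot_of_natDegree_le {R : Type*} [Semiring R] {k : ℕ} {α : ℕ → R[X]}
    {i₀ i₁ : ℕ} (hi₀ : i₀ < k) (hi₁ : i₁ < k) (hne : i₀ ≠ i₁)
    (hdeg : (α i₀).natDegree = (α i₁).natDegree)
    (hmax : ∀ j, j < k → (α j).natDegree ≤ (α i₀).natDegree) :
    ¬ HasDominantRoot k α := by
  rintro ⟨i, hi, hdom⟩
  by_cases h : i = i₀
  · subst h
    exact (hdom i₁ hi₁ hne.symm).ne hdeg.symm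
  · exact (hdom i₀ hi₀ (Ne.symm h)).not_ge (hmax i hi)

theorem setOf_triples_infinite {R : Type*} [CommSemiring R] [Nontrivial R] {N : ℕ} [NeZero N]
    (P : R[X] → Prop) (hP : ∀ n, N ∣ n → P (X ^ n + 1)) :
    {T : R[X] × R[X] × R[X] | T.1 ≠ 0 ∧ T.2.1 ≠ 0 ∧ T.2.2 ≠ 0 ∧
      T.1 ≠ T.2.1 ∧ T.1 ≠ T.2.2 ∧ T.2.1 ≠ T.2.2 ∧
      P (T.1 * T.2.1 + 1) ∧ P (T.1 * T.2.2 + 1) ∧ P (T.2.1 * T.2.2 + 1)}.Infinite := by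
  have hX : Function.Injective fun u => (X : R[X]) ^ (N * u) := fun m n h => by
    simpa [NeZero.ne N] using congrArg natDegree h
  refine Set.infinite_of_injective_forall_mem (f := fun u : ℕ =>
    ((X : R[X]) ^ (N * u), (X : R[X]) ^ (N * (u + 1)), (X : R[X]) ^ (N * (u + 2))))
    (fun u v huv => hX (congrArg Prod.fst huv)) fun u => ?_
  have hPX : ∀ d e, P (X ^ (N * d) * X ^ (N * e) + 1) := fun d e => by
    rw [← pow_add, ← mul_add]
    exact hP _ (dvd_mul_right N _)
  refine ⟨(monic_X_pow _).ne_zero, (monic_X_pow _).ne_zero, (monic_X_pow _).ne_zero,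
    fun h => ?_, fun h => ?_, fun h => ?_, hPX _ _, hPX _ _, hPX _ _⟩ <;>
  · have := hX h
    omega

section Twist

variable {K : Type*} [Field K] {N : ℕ} {ζ : K}

/-- Coefficients and roots of `G_n = N⁻¹ ∑_{j<N} (ζ ^ j * X) ^ n + 1` over `range (N + 1)`;
the last index carries the constant term as the root `1`. -/
noncomputable def twistCoeff (N i : ℕ) : K := if i < N then (N : K)⁻¹ else 1

noncomputable def twistRoot (ζ : K) (N i : ℕ) : K[X] := if i < N then C (ζ ^ i) * X else 1

theorem twistCoeff_ne_zero [NeZero N] (hζ : IsPrimitiveRoot ζ N) (i : ℕ) :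
    twistCoeff (K := K) N i ≠ 0 := by
  have := hζ.neZero'
  unfold twistCoeff
  split_ifs
  · exact inv_ne_zero (NeZero.ne _)
  · exact one_ne_zero

theorem twistRoot_ne_zero (hζ : IsPrimitiveRoot ζ N) (i : ℕ) : twistRoot ζ N i ≠ 0 := by
  unfold twistRoot
  split_ifs with hi
  · exact mul_ne_zero (C_ne_zero.2 (pow_ne_zero _ (hζ.ne_zero (by omega)))) X_ne_zero
  · exact one_ne_zero

theorem natDegree_twistRoot (hζ : IsPrimitiveRoot ζ N) (i : ℕ) :
    (twistRoot ζ N i).natDegree = if i < N then 1 else 0 := by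
  unfold twistRoot
  split_ifs with hi
  · exact natDegree_C_mul_X _ (pow_ne_zero _ (hζ.ne_zero (by omega)))
  · exact natDegree_one

theorem not_hasDominantRoot_twistRoot (hζ : IsPrimitiveRoot ζ N) (hN : 2 ≤ N) :
    ¬ HasDominantRoot (N + 1) (twistRoot ζ N) :=
  not_hasDominantRoot_of_natDegree_le (i₀ := 0) (i₁ := 1) (by omega) (by omega) one_ne_zero.symm
    (by simp only [natDegree_twistRoot hζ]; split_ifs <;> omega)
    fun j _ => by simp only [natDegree_twistRoot hζ]; split_ifs <;> omega

theorem sum_twistCoeff_mul_twistRoot_pow [NeZero N] (hζ : IsPrimitiveRoot ζ N) {n : ℕ}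
    (hn : N ∣ n) :
    ∑ i ∈ range (N + 1), C (twistCoeff N i) * twistRoot ζ N i ^ n = X ^ n + 1 := by
  have := hζ.neZero'
  have hsum : ∑ i ∈ range N, C (twistCoeff N i) * twistRoot ζ N i ^ n
      = C ((N : K)⁻¹ * ∑ i ∈ range N, (ζ ^ i) ^ n) * X ^ n := by
    rw [mul_sum, map_sum, sum_mul]
    refine sum_congr rfl fun i hi => ?_
    simp only [twistCoeff, twistRoot, if_pos (mem_range.1 hi), mul_pow, C_mul, C_pow, mul_assoc]
  rw [sum_range_succ, hsum, hζ.sum_pow_pow_eq_ite, if_pos hn, inv_mul_cancel₀ (NeZero.ne _)]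
  simp [twistCoeff, twistRoot]

end Twist

/-- Without the dominant root condition the main theorem fails: there is a
polynomial power sum `G_n = ∑ f_i α_i^n` with no dominant characteristic root admitting
infinitely many triples `(a,b,c)` of pairwise distinct nonzero polynomials such that
`ab+1`, `ac+1`, `bc+1` are all elements of `(G_n)`. -/
theorem no_dominant_root_counterexample :
    ∃ (k : ℕ) (f : ℕ → RatFunc ℂ) (α : ℕ → Polynomial ℂ),
      (∀ i, i < k → f i ≠ 0) ∧ (∀ i, i < k → α i ≠ 0) ∧
      (¬ ∃ i, i < k ∧ ∀ j, j < k → j ≠ i → (α j).natDegree < (α i).natDegree) ∧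
      {T : Polynomial ℂ × Polynomial ℂ × Polynomial ℂ |
        T.1 ≠ 0 ∧ T.2.1 ≠ 0 ∧ T.2.2 ≠ 0 ∧
        T.1 ≠ T.2.1 ∧ T.1 ≠ T.2.2 ∧ T.2.1 ≠ T.2.2 ∧
        (∃ n, algebraMap (Polynomial ℂ) (RatFunc ℂ) (T.1 * T.2.1 + 1)
            = ∑ i ∈ Finset.range k, f i * (algebraMap (Polynomial ℂ) (RatFunc ℂ) (α i)) ^ n) ∧
        (∃ n, algebraMap (Polynomial ℂ) (RatFunc ℂ) (T.1 * T.2.2 + 1)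
            = ∑ i ∈ Finset.range k, f i * (algebraMap (Polynomial ℂ) (RatFunc ℂ) (α i)) ^ n) ∧
        (∃ n, algebraMap (Polynomial ℂ) (RatFunc ℂ) (T.2.1 * T.2.2 + 1)
            = ∑ i ∈ Finset.range k, f i * (algebraMap (Polynomial ℂ) (RatFunc ℂ) (α i)) ^ n)
        }.Infinite := by
  obtain ⟨ζ, hζ⟩ : ∃ ζ : ℂ, IsPrimitiveRoot ζ 3 := ⟨_, Complex.isPrimitiveRoot_exp 3 (by norm_num)⟩
  let ι := algebraMap ℂ[X] (RatFunc ℂ)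
  refine ⟨4, fun i => ι (C (twistCoeff 3 i)), twistRoot ζ 3,
    fun i _ => RatFunc.algebraMap_ne_zero (C_ne_zero.2 (twistCoeff_ne_zero hζ i)),
    fun i _ => twistRoot_ne_zero hζ i, not_hasDominantRoot_twistRoot hζ (by norm_num), ?_⟩
  refine setOf_triples_infinite (N := 3)
    (fun p => ∃ n, ι p = ∑ i ∈ range 4, ι (C (twistCoeff 3 i)) * ι (twistRoot ζ 3 i) ^ n)
    fun n hn => ⟨n, ?_⟩
  rw [← sum_twistCoeff_mul_twistRoot_pow hζ hn]
  simp only [ι, map_sum, map_mul, map_pow]
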